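/- Let $(v_i)_{i=1}^m$ be real numbers and $(w_i)_{i=1}^m$ real numbers, and set $u_i = v_i + w_i$. For $\lambda > 0$, define $\tilde{u}_i = u_i\,\max\bigl(1 - \lambda^2 / \sum_{i=1}^m u_i^2,\, 0\bigr)$ (with $\tilde u_i = 0$ if $\sum u_i^2 = 0$). Then $\sum_{i=1}^m (\tilde{u}_i - v_i)^2 \le 10 \sum_{i=1}^m w_i^2\, \mathbf{1}\{(\sum_{i=1}^m w_i^2)^{1/2} > \lambda/2\} + 10 \min\bigl(\sum_{i=1}^m v_i^2,\ \lambda^2/4\bigr)$. -/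
import Mathlib


open Finset

theorem stein_block_oracle_lemma (m : ℕ) (v w u tu : Fin m → ℝ) (lam : ℝ)
    (hlam : 0 < lam)
    (hu : ∀ i, u i = v i + w i)
    (htu : ∀ i, tu i =
      if (∑ j, u j ^ 2) = 0 then 0
      else u i * max (1 - lam ^ 2 / (∑ j, u j ^ 2)) 0) :
    ∑ i, (tu i - v i) ^ 2 ≤
      10 * (if Real.sqrt (∑ i, w i ^ 2) > lam / 2 then ∑ i, w i ^ 2 else 0)
        + 10 * min (∑ i, v i ^ 2) (lam ^ 2 / 4) := by
  set U := ∑ j, u j ^ 2 with hUdef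
  set V := ∑ i, v i ^ 2 with hVdef
  set W := ∑ i, w i ^ 2 with hWdef
  have hUnn : 0 ≤ U := Finset.sum_nonneg fun i _ => sq_nonneg _
  have hVnn : 0 ≤ V := Finset.sum_nonneg fun i _ => sq_nonneg _
  have hWnn : 0 ≤ W := Finset.sum_nonneg fun i _ => sq_nonneg _
  have key2 : ∀ a b : Fin m → ℝ,
      ∑ i, (a i + b i) ^ 2 ≤ 2 * ∑ i, (a i) ^ 2 + 2 * ∑ i, (b i) ^ 2 := by
    intro a b
    rw [Finset.mul_sum, Finset.mul_sum, ← Finset.sum_add_distrib]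
    exact Finset.sum_le_sum fun i _ => by nlinarith [sq_nonneg (a i - b i)]
  have hind : (Real.sqrt W > lam / 2) ↔ lam ^ 2 / 4 < W := by
    rw [gt_iff_lt, show lam ^ 2 / 4 = (lam / 2) ^ 2 by ring]
    exact Real.lt_sqrt (by positivity)
  have hmin_nonneg : 0 ≤ min V (lam ^ 2 / 4) := le_min hVnn (by positivity)
  by_cases hcase : U ≤ lam ^ 2
  · -- small block: tu = 0, LHS = V
    have htu0 : ∀ i, tu i = 0 := by
      intro i
      rw [htu i]
      by_cases h0 : U = 0
      · simp [h0]
      · have hUpos : 0 < U := lt_of_le_of_ne hUnn (Ne.symm h0)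
        rw [if_neg h0]
        have h1 : 1 - lam ^ 2 / U ≤ 0 := by
          rw [sub_nonpos, le_div_iff₀ hUpos, one_mul]; exact hcase
        rw [max_eq_right h1, mul_zero]
    have hLHS : ∑ i, (tu i - v i) ^ 2 = V := by
      rw [hVdef]
      exact Finset.sum_congr rfl fun i _ => by rw [htu0 i]; ring
    rw [hLHS]
    have hVU : V ≤ 2 * U + 2 * W := by
      have h1 : V = ∑ i, (u i + (-(w i))) ^ 2 := by
        rw [hVdef]
        exact Finset.sum_congr rfl fun i _ => by rw [hu i]; ring
      have h2 := key2 u (fun i => -(w i))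
      have h3 : ∑ i, (-(w i)) ^ 2 = W := by
        rw [hWdef]; exact Finset.sum_congr rfl fun i _ => by ring
      rw [h1]
      calc ∑ i, (u i + (-(w i))) ^ 2 ≤ 2 * U + 2 * ∑ i, (-(w i)) ^ 2 := h2
        _ = 2 * U + 2 * W := by rw [h3]
    by_cases hW : Real.sqrt W > lam / 2
    · rw [if_pos hW]
      have hW' : lam ^ 2 / 4 < W := hind.mp hW
      nlinarith
    · rw [if_neg hW]
      have hW' : W ≤ lam ^ 2 / 4 := not_lt.mp (fun h => hW (hind.mpr h))
      rcases le_or_gt V (lam ^ 2 / 4) with hV | hV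
      · rw [min_eq_left hV]; nlinarith
      · rw [min_eq_right hV.le]; nlinarith
  · -- big block
    push_neg at hcase
    have hUpos : 0 < U := lt_trans (by positivity) hcase
    have htu' : ∀ i, tu i = u i * (1 - lam ^ 2 / U) := by
      intro i
      rw [htu i, if_neg (ne_of_gt hUpos)]
      congr 1
      apply max_eq_left
      rw [sub_nonneg, div_le_one hUpos]
      exact hcase.le
    set c := lam ^ 2 / U with hcdef
    have hcpos : 0 < c := by positivity
    have hLHS : ∑ i, (tu i - v i) ^ 2 ≤ 2 * W + 2 * (c ^ 2 * U) := by
      have h1 : ∀ i, tu i - v i = w i + (-(c * u i)) := by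
        intro i
        rw [htu' i, hu i]; ring
      have h2 : ∑ i, (tu i - v i) ^ 2 = ∑ i, (w i + (-(c * u i))) ^ 2 :=
        Finset.sum_congr rfl fun i _ => by rw [h1 i]
      have h3 : ∑ i, (-(c * u i)) ^ 2 = c ^ 2 * U := by
        rw [hUdef, Finset.mul_sum]
        exact Finset.sum_congr rfl fun i _ => by ring
      rw [h2]
      calc ∑ i, (w i + (-(c * u i))) ^ 2
          ≤ 2 * W + 2 * ∑ i, (-(c * u i)) ^ 2 := key2 w _
        _ = 2 * W + 2 * (c ^ 2 * U) := by rw [h3]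
    have hc2U : c ^ 2 * U ≤ lam ^ 2 := by
      rw [hcdef]
      rw [div_pow, div_mul_eq_mul_div, div_le_iff₀ (by positivity)]
      nlinarith [mul_nonneg (mul_nonneg (sq_nonneg lam) hUpos.le) (sub_pos.mpr hcase).le]
    by_cases hW : Real.sqrt W > lam / 2
    · rw [if_pos hW]
      have hW' : lam ^ 2 / 4 < W := hind.mp hW
      nlinarith
    · rw [if_neg hW]
      have hW' : W ≤ lam ^ 2 / 4 := not_lt.mp (fun h => hW (hind.mpr h))
      have hVlb : lam ^ 2 / 4 ≤ V := by
        have h1 : U ≤ 2 * V + 2 * W := by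
          have h2 : U = ∑ i, (v i + w i) ^ 2 := by
            rw [hUdef]
            exact Finset.sum_congr rfl fun i _ => by rw [hu i]
          rw [h2]; exact key2 v w
        nlinarith
      rw [min_eq_right hVlb]
      nlinarith
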